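/- arXiv:2603.26554 — 4 statements merged into one kernel-verified Lean document; each statement's English description precedes it below -/
import Mathlib

section
/- Let h(z) = (3/2)z - (1/2)z³ be the cubic Newton–Schulz map and let h^(k) denote its k-fold iterate. Then for each k ≥ 1, the map z ↦ h^(k)(z)/z is nonincreasing on [0, √3], and for every z ∈ (0, √3), the sequence h^(k)(z) converges to 1 as k → ∞. -/
/-! Write `h z = φ z · z` with `φ z = (3 - z²) / 2`. On `(0, 1]` the map `h` is increasing
into `[0, 1]` and `φ` is decreasing and nonnegative there, so
`h^[k+1] z / z = φ (h^[k] z) · (h^[k] z / z)` is a product of nonnegative antitone factors.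
On `[1, √3]` the map `h` is decreasing into `[0, 1]`, so `h^[k+1] z / z = h^[k] (h z) · z⁻¹`
is again such a product; the two pieces glue at `1`.
For `z ∈ (0, √3)` we have `h z ∈ (0, 1]`, where `h w ≥ w`: the orbit increases to a positive
fixed point of `h` in `(0, 1]`, which can only be `1`. -/

/-- The cubic Newton–Schulz map. -/
noncomputable def newtonSchulz (z : ℝ) : ℝ := 3/2 * z - 1/2 * z^3

open Set Filter Topology

theorem MonotoneOn.iterate {α : Type*} [Preorder α] {f : α → α} {s : Set α}
    (hf : MonotoneOn f s) (hs : MapsTo f s s) : ∀ n, MonotoneOn f^[n] s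
  | 0 => monotoneOn_id
  | n + 1 => (hf.iterate hs n).comp hf hs

theorem AntitoneOn.mul {α M₀ : Type*} [Preorder α] [Mul M₀] [Zero M₀] [Preorder M₀]
    [PosMulMono M₀] [MulPosMono M₀] {f g : α → M₀} {s : Set α}
    (hf : AntitoneOn f s) (hg : AntitoneOn g s)
    (hf₀ : ∀ x ∈ s, 0 ≤ f x) (hg₀ : ∀ x ∈ s, 0 ≤ g x) : AntitoneOn (f * g) s :=
  fun _ ha _ hb h ↦ mul_le_mul (hf ha hb h) (hg ha hb h) (hg₀ _ hb) (hf₀ _ ha)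

theorem newtonSchulz_eq_mul (z : ℝ) : newtonSchulz z = (3 - z ^ 2) / 2 * z := by
  unfold newtonSchulz; ring

theorem continuous_newtonSchulz : Continuous newtonSchulz := by
  unfold newtonSchulz; fun_prop

theorem mapsTo_newtonSchulz_Icc_sqrt_three :
    MapsTo newtonSchulz (Icc 0 √3) (Icc 0 1) := by
  rintro z ⟨hz₀, hz⟩
  have hz2 : z ^ 2 ≤ 3 := (Real.le_sqrt hz₀ (by norm_num)).1 hz
  rw [newtonSchulz_eq_mul]
  constructor
  · have : 0 ≤ 3 - z ^ 2 := by linarith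
    positivity
  · nlinarith [sq_nonneg (z - 1)]

theorem mapsTo_newtonSchulz_Icc : MapsTo newtonSchulz (Icc 0 1) (Icc 0 1) :=
  mapsTo_newtonSchulz_Icc_sqrt_three.mono_left
    (Icc_subset_Icc_right (Real.one_le_sqrt.2 (by norm_num)))

theorem monotoneOn_newtonSchulz : MonotoneOn newtonSchulz (Icc 0 1) := by
  rintro x ⟨hx₀, hx₁⟩ y ⟨hy₀, hy₁⟩ hxy
  have hfactor : newtonSchulz y - newtonSchulz x =
      (y - x) * (3 - (x ^ 2 + x * y + y ^ 2)) / 2 := by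
    unfold newtonSchulz; ring
  have : 0 ≤ (y - x) * (3 - (x ^ 2 + x * y + y ^ 2)) :=
    mul_nonneg (by linarith) (by nlinarith)
  linarith

theorem antitoneOn_newtonSchulz : AntitoneOn newtonSchulz (Ici 1) := by
  intro x (hx : 1 ≤ x) y (hy : 1 ≤ y) hxy
  have hfactor : newtonSchulz x - newtonSchulz y =
      (y - x) * ((x ^ 2 + x * y + y ^ 2) - 3) / 2 := by
    unfold newtonSchulz; ring
  have : 0 ≤ (y - x) * ((x ^ 2 + x * y + y ^ 2) - 3) :=
    mul_nonneg (by linarith) (by nlinarith)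
  linarith

theorem le_newtonSchulz {z : ℝ} (hz : z ∈ Icc (0 : ℝ) 1) : z ≤ newtonSchulz z := by
  obtain ⟨hz₀, hz₁⟩ := hz
  rw [newtonSchulz_eq_mul]
  nlinarith [mul_nonneg hz₀ (sub_nonneg.2 hz₁)]

theorem monotoneOn_iterate_newtonSchulz (k : ℕ) : MonotoneOn newtonSchulz^[k] (Icc 0 1) :=
  monotoneOn_newtonSchulz.iterate mapsTo_newtonSchulz_Icc k

theorem antitoneOn_iterate_div_Ioc_one (k : ℕ) :
    AntitoneOn (fun z => newtonSchulz^[k] z / z) (Ioc 0 1) := by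
  induction k with
  | zero =>
    intro x hx y hy _
    simp only [Function.iterate_zero, id_eq, div_self hx.1.ne', div_self hy.1.ne', le_refl]
  | succ k ih =>
    have hmaps : MapsTo newtonSchulz^[k] (Ioc 0 1) (Icc 0 1) :=
      (mapsTo_newtonSchulz_Icc.iterate k).mono_left Ioc_subset_Icc_self
    have hφ : AntitoneOn (fun w : ℝ => (3 - w ^ 2) / 2) (Icc 0 1) := by
      intro x hx y _ hxy
      have : x ^ 2 ≤ y ^ 2 := pow_le_pow_left₀ hx.1 hxy 2
      dsimp only; linarith
    have hsplit : (fun z => newtonSchulz^[k + 1] z / z) =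
        (fun z => (3 - (newtonSchulz^[k] z) ^ 2) / 2) * fun z => newtonSchulz^[k] z / z := by
      funext z
      simp only [Function.iterate_succ_apply', newtonSchulz_eq_mul, Pi.mul_apply, mul_div_assoc]
    rw [hsplit]
    refine AntitoneOn.mul ?_ ih ?_ ?_
    · exact hφ.comp_MonotoneOn
        ((monotoneOn_iterate_newtonSchulz k).mono Ioc_subset_Icc_self) hmaps
    · intro z hz
      have : (newtonSchulz^[k] z) ^ 2 ≤ 1 := pow_le_one₀ (hmaps hz).1 (hmaps hz).2
      linarith
    · intro z hz
      exact div_nonneg (hmaps hz).1 hz.1.le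

theorem antitoneOn_iterate_succ_div_Icc_one_sqrt_three (k : ℕ) :
    AntitoneOn (fun z => newtonSchulz^[k + 1] z / z) (Icc 1 √3) := by
  have hmaps : MapsTo newtonSchulz (Icc 1 √3) (Icc 0 1) :=
    mapsTo_newtonSchulz_Icc_sqrt_three.mono_left (Icc_subset_Icc_left zero_le_one)
  have hsplit : (fun z => newtonSchulz^[k + 1] z / z) =
      (fun z => newtonSchulz^[k] (newtonSchulz z)) * fun z => z⁻¹ := by
    funext z
    simp only [Function.iterate_succ_apply, Pi.mul_apply, div_eq_mul_inv]
  rw [hsplit]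
  refine AntitoneOn.mul ?_ ?_ ?_ ?_
  · exact (monotoneOn_iterate_newtonSchulz k).comp_AntitoneOn
      (antitoneOn_newtonSchulz.mono fun z hz => hz.1) hmaps
  · exact fun x hx y _ hxy => inv_anti₀ (zero_lt_one.trans_le hx.1) hxy
  · exact fun z hz => ((mapsTo_newtonSchulz_Icc.iterate k) (hmaps hz)).1
  · exact fun z hz => inv_nonneg.2 (zero_le_one.trans hz.1)

theorem antitoneOn_iterate_succ_div (k : ℕ) :
    AntitoneOn (fun z => newtonSchulz^[k + 1] z / z) (Ioc 0 √3) := by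
  have h1 : (1 : ℝ) ≤ √3 := Real.one_le_sqrt.2 (by norm_num)
  rw [← Ioc_union_Icc_eq_Ioc zero_lt_one h1]
  exact (antitoneOn_iterate_div_Ioc_one (k + 1)).union_right
    (antitoneOn_iterate_succ_div_Icc_one_sqrt_three k)
    ⟨right_mem_Ioc.2 zero_lt_one, fun _ hz => hz.2⟩ ⟨left_mem_Icc.2 h1, fun _ hz => hz.1⟩

theorem tendsto_iterate_newtonSchulz_of_mem_Ioc {w : ℝ} (hw : w ∈ Ioc 0 1) :
    Tendsto (fun k => newtonSchulz^[k] w) atTop (𝓝 1) := by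
  set a := fun k => newtonSchulz^[k] w
  have ha : ∀ k, a k ∈ Icc 0 1 := fun k =>
    mapsTo_newtonSchulz_Icc.iterate k (Ioc_subset_Icc_self hw)
  have hmono : Monotone a := monotone_nat_of_le_succ fun k => by
    simp only [a, Function.iterate_succ_apply']
    exact le_newtonSchulz (ha k)
  have hbdd : BddAbove (range a) := ⟨1, forall_mem_range.2 fun k => (ha k).2⟩
  have hlim : Tendsto a atTop (𝓝 (⨆ k, a k)) := tendsto_atTop_ciSup hmono hbdd
  set L := ⨆ k, a k
  have hfix : newtonSchulz L = L :=
    isFixedPt_of_tendsto_iterate hlim continuous_newtonSchulz.continuousAt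
  have hL₀ : 0 < L := hw.1.trans_le (le_ciSup hbdd 0)
  have hL₁ : L ≤ 1 := ciSup_le fun k => (ha k).2
  suffices L = 1 by rwa [this] at hlim
  rw [newtonSchulz_eq_mul] at hfix
  nlinarith

theorem tendsto_iterate_newtonSchulz {z : ℝ} (hz : z ∈ Ioo 0 √3) :
    Tendsto (fun k => newtonSchulz^[k] z) atTop (𝓝 1) := by
  have hz2 : z ^ 2 < 3 := (Real.lt_sqrt hz.1.le).1 hz.2
  have hhz : newtonSchulz z ∈ Ioc 0 1 := by
    refine ⟨?_, (mapsTo_newtonSchulz_Icc_sqrt_three ⟨hz.1.le, hz.2.le⟩).2⟩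
    rw [newtonSchulz_eq_mul]
    exact mul_pos (by linarith) hz.1
  refine (tendsto_add_atTop_iff_nat 1).1 ?_
  simpa only [Function.iterate_succ_apply] using
    tendsto_iterate_newtonSchulz_of_mem_Ioc hhz

theorem stmt_2 :
    (∀ k : ℕ, 1 ≤ k →
      AntitoneOn (fun z => newtonSchulz^[k] z / z) (Set.Ioc 0 (Real.sqrt 3)))
    ∧ ∀ z ∈ Set.Ioo (0:ℝ) (Real.sqrt 3),
        Filter.Tendsto (fun k => newtonSchulz^[k] z) Filter.atTop (nhds 1) := by
  refine ⟨fun k hk => ?_, fun _ => tendsto_iterate_newtonSchulz⟩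
  obtain ⟨n, rfl⟩ := Nat.exists_eq_add_of_le' hk
  exact antitoneOn_iterate_succ_div n
end

section
/- For λ > 0 and the scalar function h_λ(z) = z/√(z²+λ²), the associated generalized matrix function (defined on arbitrary real d×d matrices A = USV^T via h_λ(A) = U h_λ(S) V^T applied to singular values) satisfies ‖h_λ(A)‖_op ≤ 1 for all A, and the operator-norm Lipschitz bound ‖h_λ(A) - h_λ(B)‖_op ≤ λ^{-1} ‖A - B‖_op for all A, B. -/
/-!
Write `M = AᵀA + λ²` and let `S = M^{-1/2}` be the matrix of the hypothesis, so `h_λ(A) = AS`.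
Since `(AS)ᵀ(AS) + (λS)ᵀ(λS) = SMS = 1`, we get `‖ASx‖ ≤ ‖x‖`.

For the Lipschitz bound, the scalar identity `∫₀^∞ (t⁻² + s²)⁻¹ ds = πt/2`, pushed through the
continuous functional calculus of `S` (not of `M`, so that no square root has to be identified),
gives `AS = (2/π) ∫₀^∞ A(AᵀA + λ² + s²)⁻¹ ds`. Since `(2/π) ∫₀^∞ (λ² + s²)⁻¹ ds = 1/λ`, it suffices
to show `‖A(AᵀA + m)⁻¹ - B(BᵀB + m)⁻¹‖ ≤ ‖A - B‖/m`. With `P = (AAᵀ + m)⁻¹`, `Q = (BᵀB + m)⁻¹`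
the difference is `P (m(A - B) - A(A - B)ᵀB) Q = X₁ᵀD₁Y₁ + X₂ᵀD₂Y₂` where `‖Dᵢ‖ = ‖A - B‖` and the
column `(Y₁, Y₂) = (√m Q, BQ)` satisfies `Y₁ᵀY₁ + Y₂ᵀY₂ = Q`, of norm at most `1/m` (and likewise
for the row `(X₁, X₂)`); Cauchy–Schwarz bounds such a sum by `‖A - B‖/m`.
-/

open Matrix

/-- The ℓ²→ℓ² operator (spectral) norm of a real square matrix. -/
noncomputable def matOpNorm {d : ℕ} (A : Matrix (Fin d) (Fin d) ℝ) : ℝ :=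
  ‖LinearMap.toContinuousLinearMap (Matrix.toEuclideanLin A)‖

open MeasureTheory Set Real ContinuousLinearMap
open scoped Ring InnerProductSpace Matrix.Norms.L2Operator MatrixOrder

lemma inv_inv_sq_add_sq_eq {t : ℝ} (ht : 0 < t) (s : ℝ) :
    ((t ^ 2)⁻¹ + s ^ 2)⁻¹ = t ^ 2 * (1 + (t * s) ^ 2)⁻¹ := by
  field_simp

lemma integrableOn_Ioi_inv_inv_sq_add_sq {t : ℝ} (ht : 0 < t) :
    IntegrableOn (fun s : ℝ => ((t ^ 2)⁻¹ + s ^ 2)⁻¹) (Ioi 0) := by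
  simp_rw [inv_inv_sq_add_sq_eq ht]
  have h := (integrableOn_Ioi_comp_mul_left_iff (fun u : ℝ => (1 + u ^ 2)⁻¹) 0 ht).mpr
    (by simpa using integrable_inv_one_add_sq.integrableOn)
  exact h.const_mul _

lemma integral_Ioi_inv_inv_sq_add_sq {t : ℝ} (ht : 0 < t) :
    ∫ s in Ioi 0, ((t ^ 2)⁻¹ + s ^ 2)⁻¹ = π / 2 * t := by
  simp_rw [inv_inv_sq_add_sq_eq ht]
  rw [integral_const_mul, integral_comp_mul_left_Ioi (fun u : ℝ => (1 + u ^ 2)⁻¹) 0 ht]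
  simp only [mul_zero, integral_Ioi_inv_one_add_sq, arctan_zero, sub_zero, smul_eq_mul]
  field_simp

section CFC
variable {A : Type*} {a M : A}

lemma cfc_inv_inv_sq_add_sq [Ring A] [StarRing A] [TopologicalSpace A] [Algebra ℝ A]
    [ContinuousFunctionalCalculus ℝ A IsSelfAdjoint] (ha : IsSelfAdjoint a)
    (ha_pos : ∀ t ∈ spectrum ℝ a, 0 < t) (hM : a * a * M = 1) (s : ℝ) :
    cfc (fun t => ((t ^ 2)⁻¹ + s ^ 2)⁻¹) a = (M + algebraMap ℝ A (s ^ 2))⁻¹ʳ := by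
  have hsq : ∀ t ∈ spectrum ℝ a, t ^ 2 ≠ 0 := fun t ht => pow_ne_zero 2 (ha_pos t ht).ne'
  have hunit : IsUnit (a ^ 2) :=
    ((spectrum.zero_notMem_iff ℝ).mp fun h => (ha_pos 0 h).false).pow 2
  have hM' : (a ^ 2)⁻¹ʳ = M := by
    rw [← Ring.inverse_mul_cancel_left _ M hunit, sq, hM, mul_one]
  have hcont : ContinuousOn (fun t : ℝ => (t ^ 2)⁻¹) (spectrum ℝ a) :=
    (continuousOn_pow 2).inv₀ hsq
  calc cfc (fun t => ((t ^ 2)⁻¹ + s ^ 2)⁻¹) a = (cfc (fun t => (t ^ 2)⁻¹ + s ^ 2) a)⁻¹ʳ :=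
        cfc_inv _ a (fun t ht => by have := ha_pos t ht; positivity)
          (hcont.add continuousOn_const)
    _ = (cfc (fun t : ℝ => (t ^ 2)⁻¹) a + algebraMap ℝ A (s ^ 2))⁻¹ʳ := by
        rw [cfc_add_const _ _ a hcont]
    _ = ((cfc (fun t : ℝ => t ^ 2) a)⁻¹ʳ + algebraMap ℝ A (s ^ 2))⁻¹ʳ := by
        rw [cfc_inv (fun t : ℝ => t ^ 2) a hsq (continuousOn_pow 2)]
    _ = (M + algebraMap ℝ A (s ^ 2))⁻¹ʳ := by rw [cfc_pow_id a 2, hM']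

theorem integrableOn_and_setIntegral_inverse_add_sq [NormedRing A] [StarRing A]
    [NormedAlgebra ℝ A] [CompleteSpace A] [ContinuousFunctionalCalculus ℝ A IsSelfAdjoint]
    (ha : IsSelfAdjoint a) (ha_pos : ∀ t ∈ spectrum ℝ a, 0 < t) (hM : a * a * M = 1) :
    IntegrableOn (fun s : ℝ => (M + algebraMap ℝ A (s ^ 2))⁻¹ʳ) (Ioi 0) ∧
      ∫ s in Ioi 0, (M + algebraMap ℝ A (s ^ 2))⁻¹ʳ = (π / 2) • a := by
  obtain ⟨C, hC⟩ := (spectrum.isCompact (𝕜 := ℝ) a).bddAbove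
  set C' := max C 1
  have hcont : ContinuousOn (Function.uncurry fun (s t : ℝ) => ((t ^ 2)⁻¹ + s ^ 2)⁻¹)
      (Ioi 0 ×ˢ spectrum ℝ a) := by
    refine continuousOn_of_forall_continuousAt fun p hp => ?_
    have := ha_pos _ hp.2
    fun_prop (disch := positivity)
  have hbound : ∀ᵐ s ∂(volume.restrict (Ioi (0 : ℝ))), ∀ t ∈ spectrum ℝ a,
      ‖((t ^ 2)⁻¹ + s ^ 2)⁻¹‖ ≤ ((C' ^ 2)⁻¹ + s ^ 2)⁻¹ := by
    refine ae_of_all _ fun s t ht => ?_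
    have htC : t ≤ C' := (hC ht).trans (le_max_left _ _)
    have := ha_pos t ht
    rw [Real.norm_of_nonneg (by positivity)]
    gcongr
  have hint := (integrableOn_Ioi_inv_inv_sq_add_sq (by positivity : 0 < C')).hasFiniteIntegral
  simp_rw [← cfc_inv_inv_sq_add_sq ha ha_pos hM]
  refine ⟨integrableOn_cfc measurableSet_Ioi _ _ a hcont hbound hint, ?_⟩
  rw [← cfc_setIntegral measurableSet_Ioi _ _ a hcont hbound hint, ← cfc_const_mul_id (π / 2) a]
  exact cfc_congr fun t ht => integral_Ioi_inv_inv_sq_add_sq (ha_pos t ht)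
end CFC

section Operator
variable {𝕜 E : Type*} [RCLike 𝕜] [NormedAddCommGroup E] [InnerProductSpace 𝕜 E] [CompleteSpace E]

lemma norm_apply_sq_add_norm_apply_sq_le (Y₁ Y₂ : E →L[𝕜] E) (x : E) :
    ‖Y₁ x‖ ^ 2 + ‖Y₂ x‖ ^ 2 ≤ ‖star Y₁ * Y₁ + star Y₂ * Y₂‖ * ‖x‖ ^ 2 := by
  have h : ‖Y₁ x‖ ^ 2 + ‖Y₂ x‖ ^ 2 = RCLike.re ⟪(star Y₁ * Y₁ + star Y₂ * Y₂) x, x⟫_𝕜 := by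
    simp only [apply_norm_sq_eq_inner_adjoint_left, _root_.add_apply, mul_apply_eq_comp,
      star_eq_adjoint, inner_add_left, map_add, coe_comp, Function.comp_apply]
  rw [h, sq]
  calc RCLike.re ⟪(star Y₁ * Y₁ + star Y₂ * Y₂) x, x⟫_𝕜
      ≤ ‖(star Y₁ * Y₁ + star Y₂ * Y₂) x‖ * ‖x‖ := re_inner_le_norm _ _
    _ ≤ ‖star Y₁ * Y₁ + star Y₂ * Y₂‖ * ‖x‖ * ‖x‖ := by gcongr; exact le_opNorm _ _
    _ = _ := mul_assoc _ _ _

lemma norm_sq_le_norm_star_mul_self_add (Y₁ Y₂ : E →L[𝕜] E) :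
    ‖Y₁‖ ^ 2 ≤ ‖star Y₁ * Y₁ + star Y₂ * Y₂‖ := by
  have h : ‖Y₁‖ ≤ √‖star Y₁ * Y₁ + star Y₂ * Y₂‖ :=
    opNorm_le_bound _ (Real.sqrt_nonneg _) fun x =>
      (sq_le_sq₀ (norm_nonneg _) (by positivity)).mp <| by
        rw [mul_pow, Real.sq_sqrt (norm_nonneg _)]
        linarith [norm_apply_sq_add_norm_apply_sq_le Y₁ Y₂ x, sq_nonneg ‖Y₂ x‖]
  calc ‖Y₁‖ ^ 2 ≤ (√‖star Y₁ * Y₁ + star Y₂ * Y₂‖) ^ 2 := by gcongr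
    _ = _ := Real.sq_sqrt (norm_nonneg _)

lemma norm_star_mul_mul_add_le {X₁ X₂ D₁ D₂ Y₁ Y₂ : E →L[𝕜] E} {c δ : ℝ}
    (hX : ‖star X₁ * X₁ + star X₂ * X₂‖ ≤ c) (hY : ‖star Y₁ * Y₁ + star Y₂ * Y₂‖ ≤ c)
    (hD₁ : ‖D₁‖ ≤ δ) (hD₂ : ‖D₂‖ ≤ δ) :
    ‖star X₁ * D₁ * Y₁ + star X₂ * D₂ * Y₂‖ ≤ δ * c := by
  have hδ : 0 ≤ δ := (norm_nonneg _).trans hD₁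
  have hc : 0 ≤ c := (norm_nonneg _).trans hX
  refine opNorm_le_of_re_inner_le (mul_nonneg hδ hc) fun x y hx hy => ?_
  have hXy := norm_apply_sq_add_norm_apply_sq_le X₁ X₂ y
  have hYx := norm_apply_sq_add_norm_apply_sq_le Y₁ Y₂ x
  have hterm : ∀ X D Y : E →L[𝕜] E, ‖D‖ ≤ δ →
      RCLike.re ⟪(star X * D * Y) x, y⟫_𝕜 ≤ δ * (‖Y x‖ * ‖X y‖) := fun X D Y hD => by
    rw [mul_apply_eq_comp, mul_apply_eq_comp, star_eq_adjoint, adjoint_inner_left]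
    calc _ ≤ ‖D (Y x)‖ * ‖X y‖ := re_inner_le_norm _ _
      _ ≤ δ * ‖Y x‖ * ‖X y‖ := by gcongr; exact (le_opNorm _ _).trans (by gcongr)
      _ = _ := mul_assoc _ _ _
  have h₁ := hterm X₁ D₁ Y₁ hD₁
  have h₂ := hterm X₂ D₂ Y₂ hD₂
  rw [_root_.add_apply, inner_add_left, map_add]
  rw [hx] at hYx
  rw [hy] at hXy
  -- `2pq ≤ p² + q²` for each product, then the two quadratic bounds
  nlinarith [sq_nonneg (‖Y₁ x‖ - ‖X₁ y‖), sq_nonneg (‖Y₂ x‖ - ‖X₂ y‖)]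
end Operator

namespace Matrix
lemma transpose_eq_star {n : Type*} (A : Matrix n n ℝ) : Aᵀ = star A := by
  rw [star_eq_conjTranspose, conjTranspose_eq_transpose_of_trivial]

variable {n : Type*} [Fintype n] [DecidableEq n]

lemma l2_opNorm_sq_le_norm_transpose_mul_self_add (Y₁ Y₂ : Matrix n n ℝ) :
    ‖Y₁‖ ^ 2 ≤ ‖Y₁ᵀ * Y₁ + Y₂ᵀ * Y₂‖ := by
  simpa only [cstar_norm_def, transpose_eq_star, map_add, map_mul, map_star] using
    norm_sq_le_norm_star_mul_self_add (toEuclideanCLM (n := n) (𝕜 := ℝ) Y₁)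
      (toEuclideanCLM (n := n) (𝕜 := ℝ) Y₂)

lemma l2_opNorm_transpose_mul_mul_add_le {X₁ X₂ D₁ D₂ Y₁ Y₂ : Matrix n n ℝ} {c δ : ℝ}
    (hX : ‖X₁ᵀ * X₁ + X₂ᵀ * X₂‖ ≤ c) (hY : ‖Y₁ᵀ * Y₁ + Y₂ᵀ * Y₂‖ ≤ c)
    (hD₁ : ‖D₁‖ ≤ δ) (hD₂ : ‖D₂‖ ≤ δ) :
    ‖X₁ᵀ * D₁ * Y₁ + X₂ᵀ * D₂ * Y₂‖ ≤ δ * c := by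
  simp only [cstar_norm_def, transpose_eq_star, map_add, map_mul, map_star] at *
  exact norm_star_mul_mul_add_le hX hY hD₁ hD₂

variable {m : ℝ}

lemma isUnit_det_transpose_mul_self_add_smul_one (B : Matrix n n ℝ) (hm : 0 < m) :
    IsUnit (Bᵀ * B + m • 1).det := by
  have h := PosDef.posSemidef_add (posSemidef_conjTranspose_mul_self B) (PosDef.one.smul hm)
  rw [conjTranspose_eq_transpose_of_trivial] at h
  exact h.isUnit.map detMonoidHom

lemma transpose_inv_transpose_mul_self_add_smul_one (B : Matrix n n ℝ) :
    (Bᵀ * B + m • 1)⁻¹ᵀ = (Bᵀ * B + m • 1)⁻¹ := by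
  rw [transpose_nonsing_inv, transpose_add, transpose_mul, transpose_transpose, transpose_smul,
    transpose_one]

lemma transpose_mul_self_add_transpose_mul_self_eq_inv (B : Matrix n n ℝ) (hm : 0 < m) :
    (√m • (Bᵀ * B + m • 1)⁻¹)ᵀ * (√m • (Bᵀ * B + m • 1)⁻¹)
      + (B * (Bᵀ * B + m • 1)⁻¹)ᵀ * (B * (Bᵀ * B + m • 1)⁻¹) = (Bᵀ * B + m • 1)⁻¹ := by
  set R := (Bᵀ * B + m • 1)⁻¹
  have hR : (Bᵀ * B + m • 1) * R = 1 :=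
    mul_nonsing_inv _ (isUnit_det_transpose_mul_self_add_smul_one B hm)
  calc _ = Rᵀ * ((Bᵀ * B + m • 1) * R) := by
        rw [transpose_smul, transpose_mul, smul_mul_smul, ← sq, Real.sq_sqrt hm.le]
        simp only [add_mul, mul_add, Matrix.mul_smul, Matrix.smul_mul, one_mul, Matrix.mul_assoc]
        abel
    _ = R := by rw [hR, mul_one, transpose_inv_transpose_mul_self_add_smul_one]

lemma l2_opNorm_inv_transpose_mul_self_add_le (B : Matrix n n ℝ) (hm : 0 < m) :
    ‖(Bᵀ * B + m • 1)⁻¹‖ ≤ m⁻¹ := by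
  have h := l2_opNorm_sq_le_norm_transpose_mul_self_add (√m • (Bᵀ * B + m • 1)⁻¹)
    (B * (Bᵀ * B + m • 1)⁻¹)
  rw [transpose_mul_self_add_transpose_mul_self_eq_inv B hm, norm_smul, mul_pow, Real.norm_eq_abs,
    sq_abs, Real.sq_sqrt hm.le] at h
  rcases (norm_nonneg (Bᵀ * B + m • 1)⁻¹).eq_or_lt with h0 | h0
  · rw [← h0]; positivity
  · rw [← mul_one m⁻¹, le_inv_mul_iff₀ hm]
    refine le_of_mul_le_mul_right ?_ h0
    nlinarith

lemma mul_inv_transpose_mul_self_add_smul_one (A : Matrix n n ℝ) (hm : 0 < m) :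
    A * (Aᵀ * A + m • 1)⁻¹ = (A * Aᵀ + m • 1)⁻¹ * A := by
  have hP := isUnit_det_transpose_mul_self_add_smul_one Aᵀ hm
  have hQ := isUnit_det_transpose_mul_self_add_smul_one A hm
  rw [transpose_transpose] at hP
  have key : (A * Aᵀ + m • 1) * A = A * (Aᵀ * A + m • 1) := by
    simp only [add_mul, mul_add, Matrix.mul_assoc, Matrix.smul_mul, Matrix.mul_smul, one_mul,
      mul_one]
  calc A * (Aᵀ * A + m • 1)⁻¹
      = (A * Aᵀ + m • 1)⁻¹ * ((A * Aᵀ + m • 1) * A) * (Aᵀ * A + m • 1)⁻¹ := by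
        rw [nonsing_inv_mul_cancel_left _ _ hP]
    _ = (A * Aᵀ + m • 1)⁻¹ * A := by
        rw [key, ← Matrix.mul_assoc, mul_nonsing_inv_cancel_right _ _ hQ]

theorem l2_opNorm_mul_inv_sub_mul_inv_le (A B : Matrix n n ℝ) (hm : 0 < m) :
    ‖A * (Aᵀ * A + m • 1)⁻¹ - B * (Bᵀ * B + m • 1)⁻¹‖ ≤ m⁻¹ * ‖A - B‖ := by
  have hX := transpose_mul_self_add_transpose_mul_self_eq_inv Aᵀ hm
  have hXn := l2_opNorm_inv_transpose_mul_self_add_le Aᵀ hm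
  have hPt := transpose_inv_transpose_mul_self_add_smul_one (m := m) Aᵀ
  have hP := isUnit_det_transpose_mul_self_add_smul_one Aᵀ hm
  have hQ := isUnit_det_transpose_mul_self_add_smul_one B hm
  rw [transpose_transpose] at hX hXn hPt hP
  set P := (A * Aᵀ + m • 1)⁻¹
  set Q := (Bᵀ * B + m • 1)⁻¹
  have hdecomp : A * (Aᵀ * A + m • 1)⁻¹ - B * Q
      = (√m • P)ᵀ * (A - B) * (√m • Q) + (Aᵀ * P)ᵀ * (-(A - B)ᵀ) * (B * Q) := by
    have hPA : P * (A * Aᵀ + m • 1) = 1 := nonsing_inv_mul _ hP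
    have hQB : (Bᵀ * B + m • 1) * Q = 1 := mul_nonsing_inv _ hQ
    rw [mul_inv_transpose_mul_self_add_smul_one A hm]
    calc P * A - B * Q
        = P * (A * (Bᵀ * B + m • 1) - (A * Aᵀ + m • 1) * B) * Q := by
          rw [mul_sub, sub_mul, Matrix.mul_assoc P (A * _) Q, Matrix.mul_assoc A, hQB, mul_one,
            ← Matrix.mul_assoc P (A * Aᵀ + m • 1), hPA, one_mul]
      _ = _ := by
          simp only [transpose_smul, transpose_mul, transpose_transpose, hPt, transpose_sub,
            Matrix.smul_mul, Matrix.mul_smul, smul_smul, Real.mul_self_sqrt hm.le, mul_add,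
            add_mul, mul_sub, sub_mul, mul_one, one_mul, Matrix.mul_assoc, mul_neg, neg_mul]
          abel
  rw [hdecomp, mul_comm]
  refine l2_opNorm_transpose_mul_mul_add_le (c := m⁻¹) ?_ ?_ le_rfl ?_
  · rwa [hX]
  · rw [transpose_mul_self_add_transpose_mul_self_eq_inv B hm]
    exact l2_opNorm_inv_transpose_mul_self_add_le B hm
  · rw [norm_neg, ← conjTranspose_eq_transpose_of_trivial, l2_opNorm_conjTranspose]

lemma l2_opNorm_mul_le_one {A S : Matrix n n ℝ} {lam : ℝ} (hS : S.IsHermitian)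
    (hSA : S * S * (Aᵀ * A + lam ^ 2 • 1) = 1) : ‖A * S‖ ≤ 1 := by
  have hSt : Sᵀ = S := by rw [← conjTranspose_eq_transpose_of_trivial]; exact hS.eq
  have hSMS : S * (Aᵀ * A + lam ^ 2 • 1) * S = 1 :=
    mul_eq_one_comm.mp (by rwa [Matrix.mul_assoc] at hSA)
  have hsum : (A * S)ᵀ * (A * S) + (lam • S)ᵀ * (lam • S) = 1 := by
    rw [← hSMS, transpose_mul, transpose_smul, hSt]
    simp only [mul_add, add_mul, Matrix.mul_assoc, Matrix.smul_mul, Matrix.mul_smul, smul_smul,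
      mul_one, sq]
  have hone : ‖(1 : Matrix n n ℝ)‖ ≤ 1 := by
    rw [cstar_norm_def, map_one]
    exact norm_id_le
  have h := (l2_opNorm_sq_le_norm_transpose_mul_self_add (A * S) (lam • S)).trans
    (hsum ▸ hone)
  exact (pow_le_one_iff_of_nonneg (norm_nonneg _) two_ne_zero).mp h

lemma integrableOn_and_setIntegral_mul_inv_transpose_mul_self_add (A S : Matrix n n ℝ) {c : ℝ}
    (hS : S.PosDef) (hSA : S * S * (Aᵀ * A + c • 1) = 1) :
    IntegrableOn (fun s : ℝ => A * (Aᵀ * A + (c + s ^ 2) • 1)⁻¹) (Ioi 0) ∧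
      ∫ s in Ioi 0, A * (Aᵀ * A + (c + s ^ 2) • 1)⁻¹ = (π / 2) • (A * S) := by
  have hpos : ∀ t ∈ spectrum ℝ S, 0 < t := fun t ht =>
    (isStrictlyPositive_iff_posDef.mpr hS).spectrum_pos ht
  have hres : ∀ s : ℝ, (Aᵀ * A + c • 1 + algebraMap ℝ (Matrix n n ℝ) (s ^ 2))⁻¹ʳ
      = (Aᵀ * A + (c + s ^ 2) • 1)⁻¹ := fun s => by
    rw [← nonsing_inv_eq_ringInverse, Algebra.algebraMap_eq_smul_one, add_assoc, ← add_smul]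
  obtain ⟨hint, hval⟩ :=
    integrableOn_and_setIntegral_inverse_add_sq hS.isHermitian.isSelfAdjoint hpos hSA
  simp_rw [hres] at hint hval
  exact ⟨hint.const_mul A, by rw [integral_const_mul_of_integrable hint, hval, mul_smul_comm]⟩

theorem l2_opNorm_mul_sub_mul_le {A B S T : Matrix n n ℝ} {lam : ℝ} (hlam : 0 < lam)
    (hS : S.PosDef) (hT : T.PosDef) (hSA : S * S * (Aᵀ * A + lam ^ 2 • 1) = 1)
    (hTB : T * T * (Bᵀ * B + lam ^ 2 • 1) = 1) :
    ‖A * S - B * T‖ ≤ lam⁻¹ * ‖A - B‖ := by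
  obtain ⟨hA, hAS⟩ := integrableOn_and_setIntegral_mul_inv_transpose_mul_self_add A S hS hSA
  obtain ⟨hB, hBT⟩ := integrableOn_and_setIntegral_mul_inv_transpose_mul_self_add B T hT hTB
  have hdiff : A * S - B * T = (2 / π) • ∫ s in Ioi 0,
      (A * (Aᵀ * A + (lam ^ 2 + s ^ 2) • 1)⁻¹ - B * (Bᵀ * B + (lam ^ 2 + s ^ 2) • 1)⁻¹) := by
    rw [integral_sub hA hB, hAS, hBT, ← smul_sub, smul_smul, div_mul_div_cancel₀ pi_ne_zero,
      div_self two_ne_zero, one_smul]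
  have hlam' : ∀ s : ℝ, lam ^ 2 + s ^ 2 = ((lam⁻¹) ^ 2)⁻¹ + s ^ 2 := fun s => by
    rw [inv_pow, inv_inv]
  have hbound : ‖∫ s in Ioi 0,
      (A * (Aᵀ * A + (lam ^ 2 + s ^ 2) • 1)⁻¹ - B * (Bᵀ * B + (lam ^ 2 + s ^ 2) • 1)⁻¹)‖
      ≤ ∫ s in Ioi 0, (((lam⁻¹) ^ 2)⁻¹ + s ^ 2)⁻¹ * ‖A - B‖ := by
    refine norm_integral_le_of_norm_le
      ((integrableOn_Ioi_inv_inv_sq_add_sq (inv_pos.mpr hlam)).mul_const _) (ae_of_all _ ?_)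
    intro s
    rw [← hlam']
    exact l2_opNorm_mul_inv_sub_mul_inv_le A B (by positivity)
  rw [hdiff, norm_smul, Real.norm_of_nonneg (by positivity)]
  calc 2 / π * ‖_‖ ≤ 2 / π * ((π / 2 * lam⁻¹) * ‖A - B‖) := by
        rw [← integral_Ioi_inv_inv_sq_add_sq (inv_pos.mpr hlam), ← integral_mul_const]
        gcongr
    _ = lam⁻¹ * ‖A - B‖ := by field_simp

end Matrix

lemma matOpNorm_eq_l2_opNorm {d : ℕ} (A : Matrix (Fin d) (Fin d) ℝ) : matOpNorm A = ‖A‖ := rfl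

theorem stmt_6 {d : ℕ} (lam : ℝ) (hlam : 0 < lam)
    (φ : Matrix (Fin d) (Fin d) ℝ → Matrix (Fin d) (Fin d) ℝ)
    (hφ : ∀ A : Matrix (Fin d) (Fin d) ℝ,
      ∃ S : Matrix (Fin d) (Fin d) ℝ, S.PosDef ∧
        S * S * (Aᵀ * A + lam ^ 2 • (1 : Matrix (Fin d) (Fin d) ℝ)) = 1 ∧
        φ A = A * S) :
    (∀ A, matOpNorm (φ A) ≤ 1)
    ∧ ∀ A B, matOpNorm (φ A - φ B) ≤ lam⁻¹ * matOpNorm (A - B) := by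
  choose S hS hSA hφS using hφ
  simp only [matOpNorm_eq_l2_opNorm]
  refine ⟨fun A => ?_, fun A B => ?_⟩
  · rw [hφS A]
    exact l2_opNorm_mul_le_one (hS A).isHermitian (hSA A)
  · rw [hφS A, hφS B]
    exact l2_opNorm_mul_sub_mul_le hlam (hS A) (hS B) (hSA A) (hSA B)
end

section
/- Let Z_1, ..., Z_n be i.i.d. standard Gaussian random variables. There exists a constant C > 1.5 such that P(max_i Z_i ≤ √(2 log n) - C·(log log n)/√(log n)) ≤ exp(-(log n)^{C - 0.5}/(4√(πe))) for all sufficiently large n. -/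
open MeasureTheory ProbabilityTheory Real Set

/-!
Comparing the density with its value at `b` on `[a, b]` gives, for `0 ≤ a ≤ b`,
`P(Z ≤ a) ≤ 1 - (b - a) φ(b) ≤ exp (-(b - a) φ(b))`, so by independence
`P(max Zᵢ ≤ a) ≤ exp (-n (b - a) φ(b))`. Take `C = 1.6`, `L = log n`, and let `a`, `b` be the
levels `√(2L) - c log L / √L` for `c = 1.6` and `c = 1.5`. Then `b - a = 0.1 log L / √L` and
`L - b² / 2 = 1.5 √2 log L - 1.125 (log L)² / L ≥ 1.6 log L - 1/2` once `log L ≥ 9`, whence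
`n (b - a) φ(b) ≥ 0.1 log L · L ^ 1.1 / √(2πe) ≥ L ^ 1.1 / (4 √(πe))`.
-/

lemma gaussianPDFReal_antitoneOn (m : ℝ) (v : NNReal) :
    AntitoneOn (gaussianPDFReal m v) (Ici m) := by
  intro x hx y _ hxy
  simp only [gaussianPDFReal]
  gcongr
  exact sub_nonneg.2 hx

lemma ofReal_mul_gaussianPDFReal_le_gaussianReal_Ioc {m a b : ℝ} {v : NNReal} (hv : v ≠ 0)
    (ha : m ≤ a) :
    ENNReal.ofReal ((b - a) * gaussianPDFReal m v b) ≤ gaussianReal m v (Ioc a b) := by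
  rw [gaussianReal_apply m hv, mul_comm, ENNReal.ofReal_mul (gaussianPDFReal_nonneg m v b),
    ← Real.volume_Ioc, ← setLIntegral_const]
  exact setLIntegral_mono (measurable_gaussianPDF m v) fun x hx =>
    ENNReal.ofReal_le_ofReal <|
      gaussianPDFReal_antitoneOn m v (ha.trans hx.1.le) (ha.trans (hx.1.le.trans hx.2)) hx.2

lemma gaussianReal_Iic_le_exp {m a b : ℝ} {v : NNReal} (hv : v ≠ 0) (ha : m ≤ a) (hab : a ≤ b) :
    gaussianReal m v (Iic a) ≤ ENNReal.ofReal (exp (-((b - a) * gaussianPDFReal m v b))) := by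
  set g := (b - a) * gaussianPDFReal m v b
  have hg : 0 ≤ g := mul_nonneg (sub_nonneg.2 hab) (gaussianPDFReal_nonneg m v b)
  calc gaussianReal m v (Iic a) = 1 - gaussianReal m v (Ioi a) := by
        rw [← compl_Ioi, prob_compl_eq_one_sub measurableSet_Ioi]
    _ ≤ 1 - ENNReal.ofReal g := by
        gcongr
        exact (ofReal_mul_gaussianPDFReal_le_gaussianReal_Ioc hv ha).trans
          (measure_mono Ioc_subset_Ioi_self)
    _ = ENNReal.ofReal (1 - g) := by rw [ENNReal.ofReal_sub _ hg, ENNReal.ofReal_one]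
    _ ≤ ENNReal.ofReal (exp (-g)) := ENNReal.ofReal_le_ofReal (by linarith [add_one_le_exp (-g)])

lemma measure_forall_le_eq_pow {Ω ι : Type*} [MeasurableSpace Ω] [Fintype ι] {μ : Measure Ω}
    {ν : Measure ℝ} {Z : ι → Ω → ℝ} (hZ : ∀ i, Measurable (Z i)) (hind : iIndepFun Z μ)
    (hlaw : ∀ i, μ.map (Z i) = ν) (a : ℝ) :
    μ {ω | ∀ i, Z i ω ≤ a} = ν (Iic a) ^ Fintype.card ι := by
  have hset : {ω | ∀ i, Z i ω ≤ a} = ⋂ i, Z i ⁻¹' Iic a := by ext; simp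
  rw [hset, hind.meas_iInter fun i => ⟨Iic a, measurableSet_Iic, rfl⟩, ← Finset.card_univ,
    ← Finset.prod_const]
  refine Finset.prod_congr rfl fun i _ => ?_
  rw [← hlaw i, Measure.map_apply (hZ i) measurableSet_Iic]

lemma log_le_two_mul_sqrt {x : ℝ} (hx : 0 ≤ x) : log x ≤ 2 * √x := by
  calc log x ≤ x ^ (1 / 2 : ℝ) / (1 / 2) := log_le_rpow_div hx (by norm_num)
    _ = 2 * √x := by rw [← sqrt_eq_rpow]; ring

noncomputable def threshold (C L : ℝ) : ℝ := √(2 * L) - C * log L / √L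

lemma threshold_sub_threshold (c C L : ℝ) :
    threshold c L - threshold C L = (C - c) * log L / √L := by
  simp only [threshold]; ring

lemma threshold_le_threshold {c C L : ℝ} (h : c ≤ C) (hL : 1 ≤ L) :
    threshold C L ≤ threshold c L := by
  rw [← sub_nonneg, threshold_sub_threshold]
  exact div_nonneg (mul_nonneg (sub_nonneg.2 h) (log_nonneg hL)) (sqrt_nonneg L)

lemma threshold_eq (C L : ℝ) : threshold C L = √2 * √L - C * (log L / √L) := by
  rw [threshold, sqrt_mul zero_le_two, mul_div_assoc]

section Arithmetic

variable {L : ℝ}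

lemma threshold_nonneg (hL : exp 9 ≤ L) : 0 ≤ threshold 1.6 L := by
  have hL0 : 0 < L := (exp_pos 9).trans_le hL
  have hs : 3 ≤ √L := by
    rw [le_sqrt zero_le_three hL0.le]; linarith [add_one_le_exp 9]
  have hℓ := log_le_two_mul_sqrt hL0.le
  have h2 : (1.4 : ℝ) ≤ √2 := (le_sqrt (by norm_num) zero_le_two).2 (by norm_num)
  rw [threshold_eq, sub_nonneg, ← mul_div_assoc, div_le_iff₀ (by linarith)]
  nlinarith [mul_le_mul h2 hs (by norm_num) (sqrt_nonneg 2)]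

lemma sq_threshold_le (hL : exp 9 ≤ L) : threshold 1.5 L ^ 2 / 2 ≤ L + 1 / 2 - 1.6 * log L := by
  have hL0 : 0 < L := (exp_pos 9).trans_le hL
  have hℓ : 9 ≤ log L := (le_log_iff_exp_le hL0).2 hL
  have hs : 0 < √L := sqrt_pos.2 hL0
  have hu : log L / √L ≤ 2 := (div_le_iff₀ hs).2 (by linarith [log_le_two_mul_sqrt hL0.le])
  have hu0 : 0 ≤ log L / √L := by positivity
  have hus : log L / √L * √L = log L := div_mul_cancel₀ _ hs.ne'
  have h2 : (1.4 : ℝ) ≤ √2 := (le_sqrt (by norm_num) zero_le_two).2 (by norm_num)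
  have hsq : √2 ^ 2 = 2 := sq_sqrt zero_le_two
  have hsL : √L ^ 2 = L := sq_sqrt hL0.le
  rw [threshold_eq]
  nlinarith

lemma rpow_div_le_exp_mul_gaussianPDFReal (hL : exp 9 ≤ L) :
    L ^ ((1.6 : ℝ) - 0.5) / (4 * √(π * exp 1)) ≤
      exp L * ((threshold 1.5 L - threshold 1.6 L) * gaussianPDFReal 0 1 (threshold 1.5 L)) := by
  have hL0 : 0 < L := (exp_pos 9).trans_le hL
  have hℓ : 9 ≤ log L := (le_log_iff_exp_le hL0).2 hL
  have hgap : threshold 1.5 L - threshold 1.6 L = 0.1 * log L / √L := by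
    rw [threshold_sub_threshold]; norm_num
  have hexp := sq_threshold_le hL
  set b := threshold 1.5 L
  have hpow : L ^ ((1.6 : ℝ) - 0.5) = exp (1.6 * log L) / √L := by
    rw [rpow_sub hL0, rpow_def_of_pos hL0, sqrt_eq_rpow]; ring_nf
  have hsqrt : √(π * exp 1) = √π * exp (1 / 2) := by
    rw [sqrt_mul pi_pos.le, ← exp_half]
  have hpdf : gaussianPDFReal 0 1 b = (√2 * √π)⁻¹ * exp (-b ^ 2 / 2) := by
    simp only [gaussianPDFReal, NNReal.coe_one, mul_one, sub_zero, sqrt_mul zero_le_two]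
  have h2 : √2 ≤ 2 := sqrt_le_iff.2 ⟨by norm_num, by norm_num⟩
  calc L ^ ((1.6 : ℝ) - 0.5) / (4 * √(π * exp 1))
      = 1 / 4 * exp (1.6 * log L - 1 / 2) / (√L * √π) := by
        rw [hpow, hsqrt, exp_sub]; ring
    _ ≤ 0.1 * log L / √2 * exp (L - b ^ 2 / 2) / (√L * √π) := by
        gcongr ?_ * exp ?_ / _
        · rw [le_div_iff₀ (by positivity)]; linarith
        · linarith
    _ = exp L * ((b - threshold 1.6 L) * gaussianPDFReal 0 1 b) := by
        rw [hgap, hpdf, sub_eq_add_neg, ← neg_div, exp_add]; ring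

end Arithmetic

theorem stmt_9 :
    ∃ C : ℝ, 1.5 < C ∧
      ∃ n₀ : ℕ, ∀ n : ℕ, n₀ ≤ n →
        ∀ (Ω : Type) (_ : MeasurableSpace Ω) (μ : Measure Ω)
          (_ : IsProbabilityMeasure μ) (Z : Fin n → Ω → ℝ),
          (∀ i, Measurable (Z i)) →
          iIndepFun Z μ →
          (∀ i, μ.map (Z i) = gaussianReal 0 1) →
          μ {ω | ∀ i, Z i ω ≤ Real.sqrt (2 * Real.log n)
                  - C * Real.log (Real.log n) / Real.sqrt (Real.log n)}
            ≤ ENNReal.ofReal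
                (Real.exp (-(Real.log n ^ (C - 0.5))
                  / (4 * Real.sqrt (Real.pi * Real.exp 1)))) := by
  refine ⟨1.6, by norm_num, ⌈exp (exp 9)⌉₊, fun n hn Ω _ μ _ Z hZ hind hlaw => ?_⟩
  have hn' : exp (exp 9) ≤ n := Nat.ceil_le.1 hn
  have hn0 : 0 < (n : ℝ) := (exp_pos _).trans_le hn'
  have hL : exp 9 ≤ log n := (le_log_iff_exp_le hn0).2 hn'
  set g := (threshold 1.5 (log n) - threshold 1.6 (log n)) *
    gaussianPDFReal 0 1 (threshold 1.5 (log n))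
  change μ {ω | ∀ i, Z i ω ≤ threshold 1.6 (log n)} ≤ _
  rw [measure_forall_le_eq_pow hZ hind hlaw, Fintype.card_fin]
  calc gaussianReal 0 1 (Iic (threshold 1.6 (log n))) ^ n ≤ ENNReal.ofReal (exp (-g)) ^ n := by
        gcongr
        exact gaussianReal_Iic_le_exp one_ne_zero (threshold_nonneg hL)
          (threshold_le_threshold (by norm_num) ((one_le_exp (by norm_num)).trans hL))
    _ = ENNReal.ofReal (exp (-(n * g))) := by
        rw [← ENNReal.ofReal_pow (exp_nonneg _), ← exp_nat_mul, mul_neg]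
    _ ≤ _ := by
        gcongr
        rw [neg_div, neg_le_neg_iff]
        exact (rpow_div_le_exp_mul_gaussianPDFReal hL).trans_eq (by rw [exp_log hn0])
end

section
/- Let (ũ_γ)_γ be a family of i.i.d. standard Gaussian random variables indexed by a countable set, and let 𝒜, ℬ be finite multisets of indices. Then E[∏_{γ∈𝒜}(ũ_γ² - 1) · ∏_{γ∈ℬ} ũ_γ] ≥ 0. -/
/-!
Independence factors the expectation over the distinct indices γ into one-dimensional Gaussian
moments `M a b = E[(X² - 1)^a X^b]` with `a, b` the multiplicities of γ in `𝒜` and `ℬ`. Gaussian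
integration by parts, `E[X P(X)] = E[P'(X)]` for polynomials `P`, applied to
`P = (X² - 1)^a X^(b+1)` and combined with `X² = (X² - 1) + 1`, gives
`M (a+1) b = 2a M (a-1) (b+2) + b M a b` and `M 0 (b+2) = (b+1) M 0 b`, with `M 0 0 = 1` and
`M 0 1 = 0`; all coefficients being nonnegative, induction shows `M a b ≥ 0`.
-/

open MeasureTheory ProbabilityTheory Polynomial
open scoped NNReal Real

namespace ProbabilityTheory

variable {μ : ℝ} {v : ℝ≥0}

lemma integrable_pow_gaussianReal (n : ℕ) : Integrable (fun x ↦ x ^ n) (gaussianReal μ v) :=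
  (memLp_id_gaussianReal n).integrable_norm_pow'.mono' (by fun_prop)
    (ae_of_all _ fun x ↦ by simp [norm_pow])

lemma integrable_eval_gaussianReal (P : ℝ[X]) :
    Integrable (fun x ↦ P.eval x) (gaussianReal μ v) := by
  simp_rw [eval_eq_sum_range]
  exact integrable_finsetSum _ fun i _ ↦ (integrable_pow_gaussianReal i).const_mul _

lemma integrable_gaussianPDFReal_mul_iff (hv : v ≠ 0) {f : ℝ → ℝ} :
    Integrable (fun x ↦ gaussianPDFReal μ v x * f x) ↔ Integrable f (gaussianReal μ v) := by
  rw [gaussianReal_of_var_ne_zero _ hv, integrable_withDensity_iff_integrable_smul'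
    (measurable_gaussianPDF μ v) (ae_of_all _ fun _ ↦ gaussianPDF_lt_top)]
  simp

lemma hasDerivAt_gaussianPDFReal (x : ℝ) :
    HasDerivAt (gaussianPDFReal μ v) (-((x - μ) / v) * gaussianPDFReal μ v x) x := by
  have h := ((((hasDerivAt_id' x).sub_const μ).fun_pow 2).fun_neg.div_const
    (2 * (v : ℝ))).exp.const_mul (√(2 * π * v))⁻¹
  rw [← gaussianPDFReal_def] at h
  refine h.congr_deriv ?_
  rw [gaussianPDFReal]
  push_cast
  ring

lemma integral_sub_mul_eval_gaussianReal (P : ℝ[X]) :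
    ∫ x, (x - μ) * P.eval x ∂gaussianReal μ v = v * ∫ x, P.derivative.eval x ∂gaussianReal μ v := by
  rcases eq_or_ne v 0 with rfl | hv
  · simp [gaussianReal_zero_var]
  have hXP : Integrable (fun x ↦ (x - μ) * P.eval x) (gaussianReal μ v) := by
    have h := integrable_eval_gaussianReal (μ := μ) (v := v) ((X - C μ) * P)
    simpa only [Polynomial.eval_mul, eval_sub, eval_X, eval_C] using h
  have hF : Integrable (fun x ↦ gaussianPDFReal μ v x * P.eval x) :=
    (integrable_gaussianPDFReal_mul_iff hv).2 (integrable_eval_gaussianReal P)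
  have hF' : Integrable fun x ↦
      gaussianPDFReal μ v x * (P.derivative.eval x - (x - μ) * P.eval x / v) :=
    (integrable_gaussianPDFReal_mul_iff hv).2 <|
      (integrable_eval_gaussianReal P.derivative).sub (hXP.div_const _)
  have hderiv (x : ℝ) : HasDerivAt (fun x ↦ gaussianPDFReal μ v x * P.eval x)
      (gaussianPDFReal μ v x * (P.derivative.eval x - (x - μ) * P.eval x / v)) x := by
    refine ((hasDerivAt_gaussianPDFReal x).mul (P.hasDerivAt x)).congr_deriv ?_
    field_simp
    ring
  have h : ∫ x, (P.derivative.eval x - (x - μ) * P.eval x / v) ∂gaussianReal μ v = 0 := by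
    rw [integral_gaussianReal_eq_integral_smul hv]
    exact integral_eq_zero_of_hasDerivAt_of_integrable hderiv hF' hF
  rw [integral_sub (integrable_eval_gaussianReal _) (hXP.div_const _), integral_div] at h
  field_simp at h
  linarith

lemma integrable_sq_sub_one_pow_mul_pow_gaussianReal (a b : ℕ) :
    Integrable (fun x ↦ (x ^ 2 - 1) ^ a * x ^ b) (gaussianReal μ v) := by
  have h := integrable_eval_gaussianReal (μ := μ) (v := v) ((X ^ 2 - 1) ^ a * X ^ b)
  simpa only [Polynomial.eval_mul, eval_pow, eval_sub, eval_X, eval_one] using h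

noncomputable def gaussianMixedMoment (a b : ℕ) : ℝ :=
  ∫ x, (x ^ 2 - 1) ^ a * x ^ b ∂gaussianReal 0 1

lemma gaussianMixedMoment_add_two_eq_succ_add (a b : ℕ) :
    gaussianMixedMoment a (b + 2) = gaussianMixedMoment (a + 1) b + gaussianMixedMoment a b := by
  rw [gaussianMixedMoment, gaussianMixedMoment, gaussianMixedMoment, ← integral_add
    (integrable_sq_sub_one_pow_mul_pow_gaussianReal _ _)
    (integrable_sq_sub_one_pow_mul_pow_gaussianReal _ _)]
  congr with x
  ring

lemma gaussianMixedMoment_add_two_stein (a b : ℕ) :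
    gaussianMixedMoment a (b + 2)
      = 2 * a * gaussianMixedMoment (a - 1) (b + 2) + (b + 1) * gaussianMixedMoment a b := by
  have h := integral_sub_mul_eval_gaussianReal (μ := 0) (v := 1) ((X ^ 2 - 1) ^ a * X ^ (b + 1))
  simp only [sub_zero, Polynomial.eval_mul, eval_pow, eval_sub, eval_X, eval_one, NNReal.coe_one,
    derivative_mul, derivative_pow, map_natCast, derivative_sub, Nat.cast_ofNat,
    Nat.add_one_sub_one, pow_one, derivative_X, mul_one, derivative_one, Nat.cast_add, Nat.cast_one,
    map_add, map_one, add_tsub_cancel_right, eval_add, eval_natCast, eval_C, one_mul] at h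
  have hl (x : ℝ) : x * ((x ^ 2 - 1) ^ a * x ^ (b + 1)) = (x ^ 2 - 1) ^ a * x ^ (b + 2) := by ring
  have hr (x : ℝ) :
      a * (x ^ 2 - 1) ^ (a - 1) * (2 * x) * x ^ (b + 1) + (x ^ 2 - 1) ^ a * ((b + 1) * x ^ b)
        = 2 * a * ((x ^ 2 - 1) ^ (a - 1) * x ^ (b + 2)) + (b + 1) * ((x ^ 2 - 1) ^ a * x ^ b) := by
    ring
  simp only [hl, hr] at h
  rwa [integral_add ((integrable_sq_sub_one_pow_mul_pow_gaussianReal _ _).const_mul _)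
    ((integrable_sq_sub_one_pow_mul_pow_gaussianReal _ _).const_mul _), integral_const_mul,
    integral_const_mul] at h

lemma gaussianMixedMoment_succ (a b : ℕ) :
    gaussianMixedMoment (a + 1) b
      = 2 * a * gaussianMixedMoment (a - 1) (b + 2) + b * gaussianMixedMoment a b := by
  linarith [gaussianMixedMoment_add_two_eq_succ_add a b, gaussianMixedMoment_add_two_stein a b]

lemma gaussianMixedMoment_zero_nonneg (b : ℕ) : 0 ≤ gaussianMixedMoment 0 b := by
  induction b using Nat.twoStepInduction with
  | zero => simp [gaussianMixedMoment]
  | one => simp [gaussianMixedMoment, integral_id_gaussianReal]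
  | more b hb _ =>
    rw [gaussianMixedMoment_add_two_stein]
    simp only [CharP.cast_eq_zero, mul_zero, zero_mul, zero_add]
    positivity

lemma gaussianMixedMoment_nonneg (a b : ℕ) : 0 ≤ gaussianMixedMoment a b := by
  induction a using Nat.strong_induction_on generalizing b with
  | _ a ih =>
    rcases a with _ | a
    · exact gaussianMixedMoment_zero_nonneg b
    · have h₁ := ih (a - 1) (by omega) (b + 2)
      have h₂ := ih a (by omega) b
      rw [gaussianMixedMoment_succ]
      positivity

end ProbabilityTheory

lemma Multiset.prod_map_eq_prod_pow_count_of_subset {ι M : Type*} [DecidableEq ι] [CommMonoid M]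
    (s : Multiset ι) (f : ι → M) {t : Finset ι} (hst : s.toFinset ⊆ t) :
    (s.map f).prod = ∏ i ∈ t, f i ^ s.count i := by
  rw [Finset.prod_multiset_map_count]
  refine Finset.prod_subset hst fun i _ hi ↦ ?_
  rw [Multiset.count_eq_zero_of_notMem (by simpa using hi), pow_zero]

lemma ProbabilityTheory.iIndepFun.integral_finset_prod_comp {Ω ι : Type*} [MeasurableSpace Ω]
    {μ : Measure Ω} {X : ι → Ω → ℝ} (hX : iIndepFun X μ) (mX : ∀ i, AEMeasurable (X i) μ)
    {f : ι → ℝ → ℝ} (hf : ∀ i, AEStronglyMeasurable (f i) (μ.map (X i))) (s : Finset ι) :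
    ∫ ω, ∏ i ∈ s, f i (X i ω) ∂μ = ∏ i ∈ s, ∫ ω, f i (X i ω) ∂μ := by
  simp_rw [← Finset.prod_coe_sort s]
  exact (hX.precomp Subtype.val_injective).integral_fun_prod_comp (fun i : s ↦ mX i) (fun i ↦ hf i)

theorem stmt_19_general {Ω ι : Type} [MeasurableSpace Ω] (μ : Measure Ω)
    (u : ι → Ω → ℝ) (hmeas : ∀ γ, Measurable (u γ))
    (hindep : iIndepFun u μ)
    (hlaw : ∀ γ, μ.map (u γ) = gaussianReal 0 1)
    (A B : Multiset ι) :
    0 ≤ ∫ ω, (A.map (fun γ => (u γ ω) ^ 2 - 1)).prod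
              * (B.map (fun γ => u γ ω)).prod ∂μ := by
  classical
  let f (γ : ι) (x : ℝ) : ℝ := (x ^ 2 - 1) ^ A.count γ * x ^ B.count γ
  have hf (γ : ι) : Continuous (f γ) := by fun_prop
  have hprod (ω : Ω) : (A.map (fun γ => (u γ ω) ^ 2 - 1)).prod * (B.map (fun γ => u γ ω)).prod
      = ∏ γ ∈ A.toFinset ∪ B.toFinset, f γ (u γ ω) := by
    rw [Multiset.prod_map_eq_prod_pow_count_of_subset _ _ Finset.subset_union_left,
      Multiset.prod_map_eq_prod_pow_count_of_subset _ _ Finset.subset_union_right,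
      ← Finset.prod_mul_distrib]
  simp only [hprod]
  rw [hindep.integral_finset_prod_comp (fun γ ↦ (hmeas γ).aemeasurable)
    (fun γ ↦ (hf γ).aestronglyMeasurable)]
  refine Finset.prod_nonneg fun γ _ ↦ ?_
  rw [← integral_map (hmeas γ).aemeasurable (hf γ).aestronglyMeasurable, hlaw γ]
  exact gaussianMixedMoment_nonneg _ _

theorem stmt_19 {Ω ι : Type} [MeasurableSpace Ω] [Countable ι] (μ : Measure Ω)
    [IsProbabilityMeasure μ] (u : ι → Ω → ℝ) (hmeas : ∀ γ, Measurable (u γ))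
    (hindep : iIndepFun u μ)
    (hlaw : ∀ γ, μ.map (u γ) = gaussianReal 0 1)
    (A B : Multiset ι) :
    0 ≤ ∫ ω, (A.map (fun γ => (u γ ω) ^ 2 - 1)).prod
              * (B.map (fun γ => u γ ω)).prod ∂μ :=
  stmt_19_general μ u hmeas hindep hlaw A B
end
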